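/- Every successor ordinal with its order topology is a CO space, i.e., every closed subset of a compact ordinal α+1 is homeomorphic to an open subset of α+1. -/

import Mathlib

/-!
A closed subset `C` of a compact well-ordered space is compact and well-ordered, so collapsing
it onto an initial segment of the ambient order gives an order embedding whose range is a lower
set. Such an embedding is continuous, since preimages of open rays are open rays (or trivial),
hence a homeomorphism onto its range by compactness; and in a well order every lower set is
either everything or an open ray `Iio a`, so the range is open.
-/

open Set Topology

theorem InitialSeg.continuous {α β : Type*} [LinearOrder α] [TopologicalSpace α]
    [OrderClosedTopology α] [LinearOrder β] [TopologicalSpace β] [OrderTopology β]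
    (f : α ≤i β) : Continuous f := by
  rw [OrderTopology.topology_eq_generate_intervals (α := β), continuous_generateFrom_iff]
  rintro _ ⟨b, rfl | rfl⟩ <;> by_cases hb : b ∈ range f
  · obtain ⟨a, rfl⟩ := hb
    rw [show f ⁻¹' Ioi (f a) = Ioi a from Set.ext fun _ ↦ f.lt_iff_lt]
    exact isOpen_Ioi
  · have : f ⁻¹' Ioi b = ∅ :=
      eq_empty_of_forall_notMem fun a h ↦ hb (f.mem_range_of_le h.le)
    simp [this]
  · obtain ⟨a, rfl⟩ := hb
    rw [show f ⁻¹' Iio (f a) = Iio a from Set.ext fun _ ↦ f.lt_iff_lt]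
    exact isOpen_Iio
  · have : f ⁻¹' Iio b = univ :=
      eq_univ_of_forall fun a ↦ lt_of_not_ge fun h ↦ hb (f.mem_range_of_le h)
    simp [this]

theorem IsClosed.exists_isOpen_homeomorph_of_wellFoundedLT {X : Type*} [LinearOrder X]
    [WellFoundedLT X] [TopologicalSpace X] [OrderTopology X] [CompactSpace X] {C : Set X}
    (hC : IsClosed C) : ∃ U : Set X, IsOpen U ∧ Nonempty (C ≃ₜ U) := by
  have : CompactSpace C := isCompact_iff_compactSpace.mp hC.isCompact
  let f : C ≤i X := (OrderEmbedding.subtype (· ∈ C)).ltEmbedding.collapse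
  have hf : IsClosedEmbedding f := f.continuous.isClosedEmbedding f.injective
  exact ⟨range f, f.isLowerSet_range.isOpen, ⟨hf.toHomeomorph⟩⟩

theorem succ_ordinal_CO (α : Ordinal) (C : Set (Set.Iic α)) (hC : IsClosed C) :
    ∃ U : Set (Set.Iic α), IsOpen U ∧ Nonempty (C ≃ₜ U) := by
  have : CompactSpace (Iic α) := isCompact_iff_compactSpace.mp <| by
    rw [← Icc_bot]
    exact isCompact_Icc
  exact hC.exists_isOpen_homeomorph_of_wellFoundedLT
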